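/- A positive trace-preserving linear map T on the d×d complex matrices satisfies κ_tr(T) = 0 if and only if T is a replacement channel, i.e., there exists a density matrix τ such that T(X) = tr(X)·τ for all matrices X. -/

import Mathlib

open Matrix
open scoped ComplexOrder

namespace TD

variable {d : ℕ}

/-- The old Mathlib `Matrix.PosSemidef.sqrt` (removed since), with its old definition. -/
noncomputable def psdSqrt {A : Matrix (Fin d) (Fin d) ℂ} (hA : A.PosSemidef) : Matrix (Fin d) (Fin d) ℂ :=
  (hA.1.eigenvectorUnitary : Matrix (Fin d) (Fin d) ℂ) *
    diagonal (fun i => ((Real.sqrt (hA.1.eigenvalues i) : ℝ) : ℂ)) *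
    (star hA.1.eigenvectorUnitary : Matrix (Fin d) (Fin d) ℂ)

noncomputable def trNorm (A : Matrix (Fin d) (Fin d) ℂ) : ℝ :=
  ((psdSqrt (Matrix.posSemidef_conjTranspose_mul_self A)).trace).re

noncomputable def hsNorm (A : Matrix (Fin d) (Fin d) ℂ) : ℝ :=
  Real.sqrt ((Aᴴ * A).trace.re)

def Density (ρ : Matrix (Fin d) (Fin d) ℂ) : Prop :=
  ρ.PosSemidef ∧ ρ.trace = 1

def PosMap (T : Matrix (Fin d) (Fin d) ℂ →ₗ[ℂ] Matrix (Fin d) (Fin d) ℂ) : Prop :=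
  ∀ A, A.PosSemidef → (T A).PosSemidef

def TrPres (T : Matrix (Fin d) (Fin d) ℂ →ₗ[ℂ] Matrix (Fin d) (Fin d) ℂ) : Prop :=
  ∀ A, (T A).trace = A.trace

noncomputable def kappaTr (T : Matrix (Fin d) (Fin d) ℂ →ₗ[ℂ] Matrix (Fin d) (Fin d) ℂ) : ℝ :=
  ⨆ X : {X : Matrix (Fin d) (Fin d) ℂ // X.IsHermitian ∧ X.trace = 0 ∧ X ≠ 0},
    trNorm (T X.1) / trNorm X.1

noncomputable def opNorm1 (L : Matrix (Fin d) (Fin d) ℂ →ₗ[ℂ] Matrix (Fin d) (Fin d) ℂ) : ℝ :=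
  ⨆ X : {X : Matrix (Fin d) (Fin d) ℂ // X ≠ 0}, trNorm (L X.1) / trNorm X.1

noncomputable def s0 (T : Matrix (Fin d) (Fin d) ℂ →ₗ[ℂ] Matrix (Fin d) (Fin d) ℂ) : ℝ :=
  ⨆ X : {X : Matrix (Fin d) (Fin d) ℂ // X.trace = 0 ∧ X ≠ 0},
    hsNorm (T X.1) / hsNorm X.1

noncomputable def choi (T : Matrix (Fin d) (Fin d) ℂ →ₗ[ℂ] Matrix (Fin d) (Fin d) ℂ) :
    Matrix (Fin d × Fin d) (Fin d × Fin d) ℂ :=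
  Matrix.of fun p q => T (Matrix.single p.1 q.1 1) p.2 q.2

def CP (T : Matrix (Fin d) (Fin d) ℂ →ₗ[ℂ] Matrix (Fin d) (Fin d) ℂ) : Prop :=
  (choi T).PosSemidef

noncomputable def replaceChan (τ : Matrix (Fin d) (Fin d) ℂ) :
    Matrix (Fin d) (Fin d) ℂ →ₗ[ℂ] Matrix (Fin d) (Fin d) ℂ where
  toFun X := X.trace • τ
  map_add' X Y := by simp [Matrix.trace_add, add_smul]
  map_smul' c X := by simp [Matrix.trace_smul, smul_smul]

noncomputable def prodComp {n : ℕ} (T : Fin n → (Matrix (Fin d) (Fin d) ℂ →ₗ[ℂ] Matrix (Fin d) (Fin d) ℂ)) :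
    Matrix (Fin d) (Fin d) ℂ →ₗ[ℂ] Matrix (Fin d) (Fin d) ℂ :=
  (List.ofFn T).foldl (fun acc f => f ∘ₗ acc) LinearMap.id

noncomputable def lpow (T : Matrix (Fin d) (Fin d) ℂ →ₗ[ℂ] Matrix (Fin d) (Fin d) ℂ) :
    ℕ → (Matrix (Fin d) (Fin d) ℂ →ₗ[ℂ] Matrix (Fin d) (Fin d) ℂ)
  | 0 => LinearMap.id
  | n + 1 => T ∘ₗ lpow T n

noncomputable def conjPair (K0 K1 : Matrix (Fin 2) (Fin 2) ℂ) :
    Matrix (Fin 2) (Fin 2) ℂ →ₗ[ℂ] Matrix (Fin 2) (Fin 2) ℂ where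
  toFun X := K0 * X * K0ᴴ + K1 * X * K1ᴴ
  map_add' X Y := by
    simp only [Matrix.mul_add, Matrix.add_mul]
    abel
  map_smul' c X := by
    simp [Matrix.mul_smul, Matrix.smul_mul, smul_add]

end TD

/-!
A linear map on matrices that kills every traceless Hermitian matrix kills every traceless matrix
(take real and imaginary parts), hence has the form `X ↦ tr X • T ρ` for any `ρ` of trace one;
positivity and trace preservation make `T ρ` a density matrix. Conversely a replacement channel
kills traceless matrices. So `κ_tr(T) = 0` says exactly that `T` kills traceless Hermitian
matrices, provided the supremum defining `κ_tr` is a genuine one. That holds because, in terms of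
the singular values `σᵢ`, the trace norm `∑ σᵢ` and the Frobenius norm `√(∑ σᵢ²)` are equivalent.
-/

namespace Matrix

open ComplexStarModule in
lemma trace_realPart {n : Type*} [Fintype n] (X : Matrix n n ℂ) :
    (ℜ X : Matrix n n ℂ).trace = (X.trace.re : ℂ) := by
  rw [realPart_apply_coe, trace_smul, trace_add, star_eq_conjTranspose, trace_conjTranspose,
    Complex.star_def, Complex.add_conj]
  simp

open ComplexStarModule in
lemma trace_imaginaryPart {n : Type*} [Fintype n] (X : Matrix n n ℂ) :
    (ℑ X : Matrix n n ℂ).trace = (X.trace.im : ℂ) := by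
  rw [imaginaryPart_apply_coe, trace_smul, trace_smul, trace_sub, star_eq_conjTranspose,
    trace_conjTranspose, Complex.star_def, Complex.sub_conj]
  simp only [Complex.real_smul, smul_eq_mul]
  push_cast
  linear_combination (-(X.trace.im : ℂ)) * Complex.I_sq

open ComplexStarModule in
lemma map_eq_zero_of_trace_eq_zero {n M : Type*} [Fintype n] [AddCommGroup M] [Module ℂ M]
    (T : Matrix n n ℂ →ₗ[ℂ] M) (hT : ∀ X : Matrix n n ℂ, X.IsHermitian → X.trace = 0 → T X = 0)
    {X : Matrix n n ℂ} (hX : X.trace = 0) : T X = 0 := by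
  rw [← realPart_add_I_smul_imaginaryPart X, map_add, map_smul,
    hT _ (ℜ X).2 (by simp [trace_realPart, hX]), hT _ (ℑ X).2 (by simp [trace_imaginaryPart, hX]),
    smul_zero, add_zero]

lemma map_eq_trace_smul {n M : Type*} [Fintype n] [AddCommGroup M] [Module ℂ M]
    (T : Matrix n n ℂ →ₗ[ℂ] M) (hT : ∀ X : Matrix n n ℂ, X.IsHermitian → X.trace = 0 → T X = 0)
    {ρ : Matrix n n ℂ} (hρ : ρ.trace = 1) (X : Matrix n n ℂ) : T X = X.trace • T ρ := by
  have h := map_eq_zero_of_trace_eq_zero T hT (X := X - X.trace • ρ) (by simp [hρ])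
  rwa [map_sub, map_smul, sub_eq_zero] at h

lemma IsHermitian.trace_mul_self_eq_sum_sq {𝕜 n : Type*} [RCLike 𝕜] [Fintype n] [DecidableEq n]
    {A : Matrix n n 𝕜} (hA : A.IsHermitian) :
    (A * A).trace = ∑ i, (hA.eigenvalues i : 𝕜) ^ 2 := by
  conv_lhs => rw [hA.spectral_theorem, ← map_mul, Unitary.conjStarAlgAut_apply, trace_mul_cycle,
    Unitary.coe_star_mul_self, one_mul, diagonal_mul_diagonal, trace_diagonal]
  simp [sq]

end Matrix

section TraceNorm

attribute [local instance] Matrix.frobeniusNormedAddCommGroup Matrix.frobeniusNormedSpace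

lemma Matrix.frobenius_norm_sq_eq_re_trace {𝕜 m n : Type*} [RCLike 𝕜] [Fintype m] [Fintype n]
    (A : Matrix m n 𝕜) :
    ‖A‖ ^ 2 = RCLike.re (Aᴴ * A).trace := by
  rw [frobenius_norm_def, ← Real.sqrt_eq_rpow, Real.sq_sqrt (by positivity), Finset.sum_comm]
  simp only [trace, diag_apply, mul_apply, conjTranspose_apply, map_sum, RCLike.star_def,
    RCLike.conj_mul, Real.rpow_two]
  norm_cast

namespace TD

variable {d : ℕ}

lemma psdSqrt_eq_conjStarAlgAut {A : Matrix (Fin d) (Fin d) ℂ} (hA : A.PosSemidef) :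
    psdSqrt hA = Unitary.conjStarAlgAut ℂ _ hA.1.eigenvectorUnitary
      (diagonal fun i => ((Real.sqrt (hA.1.eigenvalues i) : ℝ) : ℂ)) :=
  rfl

lemma posSemidef_psdSqrt {A : Matrix (Fin d) (Fin d) ℂ} (hA : A.PosSemidef) :
    (psdSqrt hA).PosSemidef := by
  rw [psdSqrt_eq_conjStarAlgAut, Unitary.conjStarAlgAut_apply]
  refine (posSemidef_diagonal_iff.mpr fun i => ?_).mul_mul_conjTranspose_same _
  exact Complex.zero_le_real.mpr (Real.sqrt_nonneg _)

lemma psdSqrt_mul_self {A : Matrix (Fin d) (Fin d) ℂ} (hA : A.PosSemidef) :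
    psdSqrt hA * psdSqrt hA = A := by
  rw [psdSqrt_eq_conjStarAlgAut, ← map_mul, diagonal_mul_diagonal]
  conv_rhs => rw [hA.1.spectral_theorem]
  congr 2
  funext i
  simp [← Complex.ofReal_mul, Real.mul_self_sqrt (hA.eigenvalues_nonneg i)]

noncomputable def singularValues (A : Matrix (Fin d) (Fin d) ℂ) : Fin d → ℝ :=
  (posSemidef_psdSqrt (posSemidef_conjTranspose_mul_self A)).1.eigenvalues

lemma singularValues_nonneg (A : Matrix (Fin d) (Fin d) ℂ) (i : Fin d) :
    0 ≤ singularValues A i :=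
  (posSemidef_psdSqrt _).eigenvalues_nonneg i

lemma trNorm_eq_sum_singularValues (A : Matrix (Fin d) (Fin d) ℂ) :
    trNorm A = ∑ i, singularValues A i := by
  rw [trNorm, (posSemidef_psdSqrt _).1.trace_eq_sum_eigenvalues, Complex.re_sum]
  rfl

lemma frobenius_norm_sq_eq_sum_singularValues_sq (A : Matrix (Fin d) (Fin d) ℂ) :
    ‖A‖ ^ 2 = ∑ i, singularValues A i ^ 2 := by
  rw [frobenius_norm_sq_eq_re_trace, ← psdSqrt_mul_self (posSemidef_conjTranspose_mul_self A),
    (posSemidef_psdSqrt _).1.trace_mul_self_eq_sum_sq, map_sum]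
  norm_cast

lemma trNorm_nonneg (A : Matrix (Fin d) (Fin d) ℂ) : 0 ≤ trNorm A := by
  rw [trNorm_eq_sum_singularValues]
  exact Finset.sum_nonneg fun i _ => singularValues_nonneg A i

lemma frobenius_norm_le_trNorm (A : Matrix (Fin d) (Fin d) ℂ) : ‖A‖ ≤ trNorm A := by
  refine (pow_le_pow_iff_left₀ (norm_nonneg A) (trNorm_nonneg A) two_ne_zero).mp ?_
  rw [frobenius_norm_sq_eq_sum_singularValues_sq, trNorm_eq_sum_singularValues]
  exact Finset.sum_sq_le_sq_sum_of_nonneg fun i _ => singularValues_nonneg A i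

lemma trNorm_le_sqrt_mul_frobenius_norm (A : Matrix (Fin d) (Fin d) ℂ) :
    trNorm A ≤ Real.sqrt d * ‖A‖ := by
  refine (pow_le_pow_iff_left₀ (trNorm_nonneg A) (by positivity) two_ne_zero).mp ?_
  rw [mul_pow, Real.sq_sqrt d.cast_nonneg, frobenius_norm_sq_eq_sum_singularValues_sq,
    trNorm_eq_sum_singularValues]
  simpa using sq_sum_le_card_mul_sum_sq (s := Finset.univ) (f := singularValues A)

lemma trNorm_eq_zero_iff {A : Matrix (Fin d) (Fin d) ℂ} : trNorm A = 0 ↔ A = 0 := by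
  refine ⟨fun h => norm_le_zero_iff.mp (h ▸ frobenius_norm_le_trNorm A), ?_⟩
  rintro rfl
  refine le_antisymm ?_ (trNorm_nonneg 0)
  simpa using trNorm_le_sqrt_mul_frobenius_norm (0 : Matrix (Fin d) (Fin d) ℂ)

lemma exists_trNorm_map_le (L : Matrix (Fin d) (Fin d) ℂ →ₗ[ℂ] Matrix (Fin d) (Fin d) ℂ) :
    ∃ C, ∀ X, trNorm (L X) ≤ C * trNorm X := by
  obtain ⟨c, hc, hL⟩ := (LinearMap.toContinuousLinearMap L).bound
  refine ⟨Real.sqrt d * c, fun X => ?_⟩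
  calc trNorm (L X) ≤ Real.sqrt d * ‖L X‖ := trNorm_le_sqrt_mul_frobenius_norm (L X)
    _ ≤ Real.sqrt d * (c * trNorm X) := by
      gcongr
      exact (hL X).trans (by gcongr; exact frobenius_norm_le_trNorm X)
    _ = Real.sqrt d * c * trNorm X := (mul_assoc _ _ _).symm

lemma density_diagonal_single (i : Fin d) : Density (diagonal (Pi.single i 1)) := by
  refine ⟨posSemidef_diagonal_iff.mpr fun j => ?_, by simp [trace_diagonal]⟩
  rcases eq_or_ne j i with rfl | h <;> simp [*]

-- `kappaTr` is a real `⨆`, which takes the junk value `0` when the ratios are unbounded.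
lemma bddAbove_range_trNorm_div (T : Matrix (Fin d) (Fin d) ℂ →ₗ[ℂ] Matrix (Fin d) (Fin d) ℂ) :
    BddAbove (Set.range fun X :
      {X : Matrix (Fin d) (Fin d) ℂ // X.IsHermitian ∧ X.trace = 0 ∧ X ≠ 0} =>
        trNorm (T X.1) / trNorm X.1) := by
  obtain ⟨C, hC⟩ := exists_trNorm_map_le T
  refine ⟨C, Set.forall_mem_range.mpr fun X => ?_⟩
  have hX : 0 < trNorm X.1 := (trNorm_nonneg _).lt_of_ne' (trNorm_eq_zero_iff.not.mpr X.2.2.2)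
  exact (div_le_iff₀ hX).mpr (hC X.1)

lemma kappaTr_eq_zero_iff (T : Matrix (Fin d) (Fin d) ℂ →ₗ[ℂ] Matrix (Fin d) (Fin d) ℂ) :
    kappaTr T = 0 ↔ ∀ X : Matrix (Fin d) (Fin d) ℂ, X.IsHermitian → X.trace = 0 → T X = 0 := by
  constructor
  · intro hκ X hH hX
    by_contra hTX
    have hX0 : X ≠ 0 := by rintro rfl; exact hTX (map_zero T)
    have hle := le_ciSup (bddAbove_range_trNorm_div T) ⟨X, hH, hX, hX0⟩
    rw [← kappaTr, hκ] at hle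
    have hpos : 0 < trNorm (T X) / trNorm X :=
      div_pos ((trNorm_nonneg _).lt_of_ne' (trNorm_eq_zero_iff.not.mpr hTX))
        ((trNorm_nonneg _).lt_of_ne' (trNorm_eq_zero_iff.not.mpr hX0))
    exact hle.not_gt hpos
  · intro hT
    rw [kappaTr, ← Real.iSup_const_zero]
    refine iSup_congr fun X => ?_
    rw [hT _ X.2.1 X.2.2.1, trNorm_eq_zero_iff.mpr rfl, zero_div]

end TD

end TraceNorm

theorem stmt3 {d : ℕ} (hd : 2 ≤ d)
    (T : Matrix (Fin d) (Fin d) ℂ →ₗ[ℂ] Matrix (Fin d) (Fin d) ℂ)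
    (hpos : TD.PosMap T) (htr : TD.TrPres T) :
    TD.kappaTr T = 0 ↔
      ∃ τ : Matrix (Fin d) (Fin d) ℂ, TD.Density τ ∧ ∀ X : Matrix (Fin d) (Fin d) ℂ, T X = X.trace • τ := by
  rw [TD.kappaTr_eq_zero_iff]
  constructor
  · intro hT
    have hρ := TD.density_diagonal_single (⟨0, by omega⟩ : Fin d)
    exact ⟨T _, ⟨hpos _ hρ.1, (htr _).trans hρ.2⟩, map_eq_trace_smul T hT hρ.2⟩
  · rintro ⟨τ, -, hτ⟩ X - hX
    rw [hτ, hX, zero_smul]
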